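/- Let a₁, a₂, a₃, m be real numbers. The 4×4 complex matrix M with rows [a₁²+a₂²+a₃²+4m², 2i a₁a₂, 2a₂a₃, −2i a₁a₃], [−2i a₁a₂, a₁²+a₂²+a₃²+4m², −2i a₁a₃, −2a₂a₃], [2a₂a₃, 2i a₁a₃, a₁²+a₂²+a₃²+4m², −2i a₁a₂], [2i a₁a₃, −2a₂a₃, 2i a₁a₂, a₁²+a₂²+a₃²+4m²] has determinant ((a₁+a₂+a₃)²+4m²)((a₁−a₂+a₃)²+4m²)((a₁+a₂−a₃)²+4m²)((−a₁+a₂+a₃)²+4m²). -/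

import Mathlib

open Matrix Complex
set_option maxHeartbeats 1000000 in
theorem detf (M : Matrix (Fin 4) (Fin 4) ℂ) : M.det =
    M 0 0 * (M 1 1 * (M 2 2 * M 3 3 - M 2 3 * M 3 2) - M 1 2 * (M 2 1 * M 3 3 - M 2 3 * M 3 1) + M 1 3 * (M 2 1 * M 3 2 - M 2 2 * M 3 1))
  - M 0 1 * (M 1 0 * (M 2 2 * M 3 3 - M 2 3 * M 3 2) - M 1 2 * (M 2 0 * M 3 3 - M 2 3 * M 3 0) + M 1 3 * (M 2 0 * M 3 2 - M 2 2 * M 3 0))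
  + M 0 2 * (M 1 0 * (M 2 1 * M 3 3 - M 2 3 * M 3 1) - M 1 1 * (M 2 0 * M 3 3 - M 2 3 * M 3 0) + M 1 3 * (M 2 0 * M 3 1 - M 2 1 * M 3 0))
  - M 0 3 * (M 1 0 * (M 2 1 * M 3 2 - M 2 2 * M 3 1) - M 1 1 * (M 2 0 * M 3 2 - M 2 2 * M 3 0) + M 1 2 * (M 2 0 * M 3 1 - M 2 1 * M 3 0)) := by
  simp [Matrix.det_succ_row_zero, Fin.sum_univ_succ, Fin.succAbove, show (Fin.succ 2 : Fin 4) = 3 from rfl, show (Fin.castSucc 2 : Fin 4) = 2 from rfl]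
  ring

set_option maxHeartbeats 2000000 in
theorem stmt2 (a₁ a₂ a₃ m : ℝ) :
    (!![((a₁^2 + a₂^2 + a₃^2 + 4*m^2 : ℝ) : ℂ), 2*I*(a₁*a₂ : ℝ), ((2*a₂*a₃ : ℝ) : ℂ), -(2*I*(a₁*a₃ : ℝ));
       -(2*I*(a₁*a₂ : ℝ)), ((a₁^2 + a₂^2 + a₃^2 + 4*m^2 : ℝ) : ℂ), -(2*I*(a₁*a₃ : ℝ)), -((2*a₂*a₃ : ℝ) : ℂ);
       ((2*a₂*a₃ : ℝ) : ℂ), 2*I*(a₁*a₃ : ℝ), ((a₁^2 + a₂^2 + a₃^2 + 4*m^2 : ℝ) : ℂ), -(2*I*(a₁*a₂ : ℝ));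
       2*I*(a₁*a₃ : ℝ), -((2*a₂*a₃ : ℝ) : ℂ), 2*I*(a₁*a₂ : ℝ), ((a₁^2 + a₂^2 + a₃^2 + 4*m^2 : ℝ) : ℂ)] :
        Matrix (Fin 4) (Fin 4) ℂ).det
    = ((((a₁+a₂+a₃)^2 + 4*m^2) * ((a₁-a₂+a₃)^2 + 4*m^2)
        * ((a₁+a₂-a₃)^2 + 4*m^2) * ((-a₁+a₂+a₃)^2 + 4*m^2) : ℝ) : ℂ) := by
  rw [detf]
  norm_num [Matrix.cons_val_two, Matrix.cons_val_three]
  ring_nf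
  simp only [show (I:ℂ)^4 = 1 by simp [pow_succ, Complex.I_mul_I], Complex.I_sq, mul_one, mul_neg_one]
  ring
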